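/- Assume condition (★) holds for every x ∈ V∪∂V. Then the function g^w : {0,1}^{E∪∂E} → (0,∞) defined by g^w(ω) = Π_{C : C∩∂V=∅} Σ_{m=1}^q exp(β Σ_{x∈C} h_{x,m}) · Π_{C : C∩∂V≠∅} exp(β Σ_{x∈C} h_{x,max}), the products running over the open clusters C of ω, is monotone decreasing: if ω ⪯ ω′ then g^w(ω′) ≤ g^w(ω). -/

import Mathlib

open Classical Finset

noncomputable section

/-- Two vertices are joined by an open edge of the configuration `ω`. -/
def OpenAdj {V E : Type*} (ends : E → V × V) (ω : E → Bool) (x y : V) : Prop :=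
  ∃ e, ω e = true ∧ (ends e = (x, y) ∨ ends e = (y, x))

/-- `x` and `y` lie in the same open cluster of the configuration `ω`. -/
def ConnIn {V E : Type*} (ends : E → V × V) (ω : E → Bool) (x y : V) : Prop :=
  Relation.ReflTransGen (OpenAdj ends ω) x y

/-- The open cluster of the vertex `x` in the configuration `ω`. -/
def cluster {V E : Type*} [Fintype V] (ends : E → V × V) (ω : E → Bool) (x : V) : Finset V :=
  Finset.univ.filter fun y => ConnIn ends ω x y

/-- The collection of all open clusters of the configuration `ω`
(the vertex sets of the connected components of the open subgraph). -/
def clusters {V E : Type*} [Fintype V] (ends : E → V × V) (ω : E → Bool) :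
    Finset (Finset V) :=
  Finset.univ.image fun x => cluster ends ω x

/-- The free cluster weight `Θ^f[C] = Σ_{m=1}^q exp(β Σ_{x∈C} h_{x,m})`. -/
def thetaF {V : Type*} (q : ℕ) (β : ℝ) (h : V → Fin q → ℝ) (C : Finset V) : ℝ :=
  ∑ m : Fin q, Real.exp (β * ∑ x ∈ C, h x m)

/-- The max-wired cluster weight: `Θ^f[C]` for clusters not touching the boundary `Vb`,
and `exp(β Σ_{x∈C} hmax x)` for clusters touching the boundary. -/
def thetaW {V : Type*} (q : ℕ) (β : ℝ) (h : V → Fin q → ℝ) (hmax : V → ℝ)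
    (Vb : Finset V) (C : Finset V) : ℝ :=
  if C ∩ Vb = ∅ then thetaF q β h C else Real.exp (β * ∑ x ∈ C, hmax x)

/-- The function `g^f(ω) = Π_C Θ^f[C]`, the product over the open clusters of `ω`. -/
def gFree {V E : Type*} [Fintype V] (ends : E → V × V) (q : ℕ) (β : ℝ)
    (h : V → Fin q → ℝ) (ω : E → Bool) : ℝ :=
  ∏ C ∈ clusters ends ω, thetaF q β h C

/-- The function `g^w(ω) = Π_C Θ^w[C]`, the product over the open clusters of `ω`. -/
def gWired {V E : Type*} [Fintype V] (ends : E → V × V) (q : ℕ) (β : ℝ)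
    (h : V → Fin q → ℝ) (hmax : V → ℝ) (Vb : Finset V) (ω : E → Bool) : ℝ :=
  ∏ C ∈ clusters ends ω, thetaW q β h hmax Vb C

/-- The edge factor `Π_e (exp(qβJ_e) − 1)^{ω_e}`. -/
def edgeFactor {E : Type*} [Fintype E] (q : ℕ) (β : ℝ) (J : E → ℝ) (ω : E → Bool) : ℝ :=
  ∏ e : E, if ω e then Real.exp ((q : ℝ) * β * J e) - 1 else 1

/-- The unnormalised weight of the free random-cluster measure. -/
def freeWeight {V E : Type*} [Fintype V] [Fintype E] (ends : E → V × V) (q : ℕ) (β : ℝ)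
    (J : E → ℝ) (h : V → Fin q → ℝ) (ω : E → Bool) : ℝ :=
  edgeFactor q β J ω * gFree ends q β h ω

/-- The expectation `φ^f_{G;β,q,ĥ}(f)` under the free random-cluster measure. -/
def freeExp {V E : Type*} [Fintype V] [Fintype E] (ends : E → V × V) (q : ℕ) (β : ℝ)
    (J : E → ℝ) (h : V → Fin q → ℝ) (f : (E → Bool) → ℝ) : ℝ :=
  (∑ ω : E → Bool, f ω * freeWeight ends q β J h ω) /
    ∑ ω : E → Bool, freeWeight ends q β J h ω

/-- The unnormalised weight of the max-wired random-cluster measure: supported on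
configurations opening all boundary edges `Eb`, with edge factor over interior edges
and cluster weights `Θ^w`. -/
def wiredWeight {V E : Type*} [Fintype V] [Fintype E] (ends : E → V × V) (q : ℕ) (β : ℝ)
    (J : E → ℝ) (h : V → Fin q → ℝ) (hmax : V → ℝ) (Vb : Finset V) (Eb : Finset E)
    (ω : E → Bool) : ℝ :=
  (if ∀ e ∈ Eb, ω e = true then (1 : ℝ) else 0) *
    (∏ e ∈ Ebᶜ, if ω e then Real.exp ((q : ℝ) * β * J e) - 1 else 1) *
    gWired ends q β h hmax Vb ω

/-- The expectation `φ^w_{G;β,q,ĥ}(f)` under the max-wired random-cluster measure. -/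
def wiredExp {V E : Type*} [Fintype V] [Fintype E] (ends : E → V × V) (q : ℕ) (β : ℝ)
    (J : E → ℝ) (h : V → Fin q → ℝ) (hmax : V → ℝ) (Vb : Finset V) (Eb : Finset E)
    (f : (E → Bool) → ℝ) : ℝ :=
  (∑ ω : E → Bool, f ω * wiredWeight ends q β J h hmax Vb Eb ω) /
    ∑ ω : E → Bool, wiredWeight ends q β J h hmax Vb Eb ω

/-- The expectation under the Bernoulli product measure in which each edge `e` is
independently open with probability `p_e = 1 − exp(−qβJ_e)`. -/
def bernExp {E : Type*} [Fintype E] (q : ℕ) (β : ℝ) (J : E → ℝ)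
    (f : (E → Bool) → ℝ) : ℝ :=
  ∑ ω : E → Bool, f ω *
    ∏ e : E, if ω e then 1 - Real.exp (-((q : ℝ) * β * J e))
      else Real.exp (-((q : ℝ) * β * J e))

/-- A function of configurations is increasing for the coordinatewise order. -/
def IncreasingFn {E : Type*} (f : (E → Bool) → ℝ) : Prop :=
  ∀ ⦃ω ω' : E → Bool⦄, (∀ e, ω e ≤ ω' e) → f ω ≤ f ω'

/-- Condition (★): there is a common colour `m*` attaining the maximal field
value `h_{x,max}` at every vertex `x`. -/
def StarCond {V : Type*} (q : ℕ) (h : V → Fin q → ℝ) : Prop :=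
  ∃ m : Fin q, ∀ x k, h x k ≤ h x m

/-- Compatibility of the boundary data: every boundary edge joins an interior vertex to a
boundary vertex, and every interior edge joins two interior vertices (this is the structure
of `E ∪ ∂E` for a finite subgraph `G = (V,E)` of the hypercubic lattice, with `Vb = ∂V`
and `Eb = ∂E`). -/
def BdryCompatible {V E : Type*} (ends : E → V × V) (Vb : Finset V) (Eb : Finset E) : Prop :=
  (∀ e ∈ Eb, ((ends e).1 ∈ Vb ∧ (ends e).2 ∉ Vb) ∨ ((ends e).1 ∉ Vb ∧ (ends e).2 ∈ Vb)) ∧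
    ∀ e ∉ Eb, (ends e).1 ∉ Vb ∧ (ends e).2 ∉ Vb

/-- Indicator of the event `{x ↔ y}`. -/
def connInd {V E : Type*} (ends : E → V × V) (x y : V) (ω : E → Bool) : ℝ :=
  if ConnIn ends ω x y then 1 else 0

/-- Indicator of the event `{x ↔ S}` that some vertex of `S` lies in the open cluster
of `x`. -/
def connToSetInd {V E : Type*} (ends : E → V × V) (x : V) (S : Finset V)
    (ω : E → Bool) : ℝ :=
  if ∃ y ∈ S, ConnIn ends ω x y then 1 else 0

/-!
Opening edges only merges clusters: every open cluster of `ω'` is the disjoint union of the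
open clusters of `ω` it contains. Hence it suffices that the cluster weight `Θ^w` is
submultiplicative on disjoint unions, `Θ^w[C ∪ D] ≤ Θ^w[C] Θ^w[D]`. For two free clusters
this holds because the diagonal terms of `Θ^f[C] Θ^f[D]` already give `Θ^f[C ∪ D]`; for two
wired clusters it is an equality; and in the mixed case (★) gives
`exp(β Σ_{x∈C} h_{x,max}) = exp(β Σ_{x∈C} h_{x,m*}) ≤ Θ^f[C]`.
-/

section Clusters
variable {V E : Type*} {ends : E → V × V} {ω ω' : E → Bool} {a b : V}

lemma connIn_symm (hab : ConnIn ends ω a b) : ConnIn ends ω b a :=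
  have : Std.Symm (OpenAdj ends ω) := ⟨fun _ _ ⟨e, he, hends⟩ => ⟨e, he, hends.symm⟩⟩
  (Relation.ReflTransGen.stdSymm (r := OpenAdj ends ω)).symm _ _ hab

lemma connIn_mono (hle : ∀ e, ω e ≤ ω' e) (hab : ConnIn ends ω a b) : ConnIn ends ω' a b :=
  Relation.ReflTransGen.mono (fun _ _ ⟨e, he, hends⟩ =>
    ⟨e, top_le_iff.mp (he ▸ hle e : true ≤ ω' e), hends⟩) _ _ hab

variable [Fintype V]

lemma mem_cluster_iff : b ∈ cluster ends ω a ↔ ConnIn ends ω a b := by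
  simp [cluster]

lemma mem_cluster_self : a ∈ cluster ends ω a :=
  mem_cluster_iff.mpr Relation.ReflTransGen.refl

lemma cluster_eq_of_connIn (hab : ConnIn ends ω a b) : cluster ends ω a = cluster ends ω b := by
  ext z
  simp only [mem_cluster_iff]
  exact ⟨(connIn_symm hab).trans, hab.trans⟩

lemma cluster_subset_cluster (hle : ∀ e, ω e ≤ ω' e) : cluster ends ω a ⊆ cluster ends ω' a :=
  fun _ hb => mem_cluster_iff.mpr (connIn_mono hle (mem_cluster_iff.mp hb))

lemma cluster_mem_clusters : cluster ends ω a ∈ clusters ends ω :=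
  mem_image_of_mem _ (mem_univ a)

lemma eq_cluster_of_mem {C : Finset V} (hC : C ∈ clusters ends ω) (ha : a ∈ C) :
    C = cluster ends ω a := by
  obtain ⟨x, -, rfl⟩ := mem_image.mp hC
  exact cluster_eq_of_connIn (mem_cluster_iff.mp ha)

lemma pairwiseDisjoint_clusters :
    (clusters ends ω : Set (Finset V)).PairwiseDisjoint id := by
  intro C hC D hD hCD
  refine disjoint_left.mpr fun a haC haD => hCD ?_
  rw [eq_cluster_of_mem hC haC, eq_cluster_of_mem hD haD]

def subclusters (ends : E → V × V) (ω : E → Bool) (D : Finset V) : Finset (Finset V) :=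
  (clusters ends ω).filter (· ⊆ D)

lemma biUnion_subclusters (hle : ∀ e, ω e ≤ ω' e) {D : Finset V}
    (hD : D ∈ clusters ends ω') : (subclusters ends ω D).biUnion id = D := by
  refine Subset.antisymm (biUnion_subset.mpr fun C hC => (mem_filter.mp hC).2) fun a ha => ?_
  exact mem_biUnion.mpr ⟨cluster ends ω a,
    mem_filter.mpr ⟨cluster_mem_clusters, eq_cluster_of_mem hD ha ▸ cluster_subset_cluster hle⟩,
    mem_cluster_self⟩

lemma subclusters_nonempty (hle : ∀ e, ω e ≤ ω' e) {D : Finset V}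
    (hD : D ∈ clusters ends ω') : (subclusters ends ω D).Nonempty := by
  obtain ⟨a, -, rfl⟩ := mem_image.mp hD
  exact ⟨cluster ends ω a, mem_filter.mpr ⟨cluster_mem_clusters, cluster_subset_cluster hle⟩⟩

lemma clusters_eq_biUnion_subclusters (hle : ∀ e, ω e ≤ ω' e) :
    clusters ends ω = (clusters ends ω').biUnion (subclusters ends ω) := by
  ext C
  simp only [mem_biUnion, subclusters, mem_filter]
  refine ⟨fun hC => ?_, fun ⟨_, _, hC, _⟩ => hC⟩
  obtain ⟨a, -, rfl⟩ := mem_image.mp hC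
  exact ⟨cluster ends ω' a, cluster_mem_clusters, hC, cluster_subset_cluster hle⟩

lemma pairwiseDisjoint_subclusters (ω : E → Bool) :
    (clusters ends ω' : Set (Finset V)).PairwiseDisjoint (subclusters ends ω) := by
  intro D hD D' hD' hDD'
  refine disjoint_left.mpr fun C hC hC' => ?_
  obtain ⟨a, -, rfl⟩ := mem_image.mp (mem_filter.mp hC).1
  exact disjoint_left.mp (pairwiseDisjoint_clusters hD hD' hDD')
    ((mem_filter.mp hC).2 mem_cluster_self) ((mem_filter.mp hC').2 mem_cluster_self)

end Clusters

lemma le_prod_of_disjoint_union_le {α : Type*} [DecidableEq α] (θ : Finset α → ℝ)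
    (hθ_nonneg : ∀ C, 0 ≤ θ C) (hθ : ∀ C D, Disjoint C D → θ (C ∪ D) ≤ θ C * θ D)
    {S : Finset (Finset α)} (hS : S.Nonempty) (hdisj : (S : Set (Finset α)).PairwiseDisjoint id) :
    θ (S.biUnion id) ≤ ∏ C ∈ S, θ C := by
  induction hS using Finset.Nonempty.cons_induction with
  | singleton C => simp
  | cons C S hCS hS ih =>
    rw [coe_cons, Set.pairwiseDisjoint_insert_of_notMem hCS] at hdisj
    have hdisjC : Disjoint C (S.biUnion id) :=
      (disjoint_biUnion_right _ _ _).mpr hdisj.2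
    rw [cons_eq_insert, biUnion_insert, prod_insert hCS]
    calc θ (C ∪ S.biUnion id) ≤ θ C * θ (S.biUnion id) := hθ _ _ hdisjC
      _ ≤ θ C * ∏ D ∈ S, θ D := mul_le_mul_of_nonneg_left (ih hdisj.1) (hθ_nonneg C)

theorem prod_clusters_le_of_le {V E : Type*} [Fintype V] (ends : E → V × V)
    (θ : Finset V → ℝ) (hθ_nonneg : ∀ C, 0 ≤ θ C)
    (hθ : ∀ C D, Disjoint C D → θ (C ∪ D) ≤ θ C * θ D)
    {ω ω' : E → Bool} (hle : ∀ e, ω e ≤ ω' e) :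
    ∏ D ∈ clusters ends ω', θ D ≤ ∏ C ∈ clusters ends ω, θ C := by
  rw [clusters_eq_biUnion_subclusters hle, prod_biUnion (pairwiseDisjoint_subclusters ω)]
  refine prod_le_prod (fun D _ => hθ_nonneg D) fun D hD => ?_
  calc θ D = θ ((subclusters ends ω D).biUnion id) := by rw [biUnion_subclusters hle hD]
    _ ≤ ∏ C ∈ subclusters ends ω D, θ C :=
      le_prod_of_disjoint_union_le θ hθ_nonneg hθ (subclusters_nonempty hle hD)
        (pairwiseDisjoint_clusters.subset (filter_subset _ _))

section Weights
variable {V : Type*} {q : ℕ} {β : ℝ} {h : V → Fin q → ℝ} {hmax : V → ℝ} {Vb : Finset V}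

lemma thetaF_nonneg (C : Finset V) : 0 ≤ thetaF q β h C :=
  sum_nonneg fun _ _ => (Real.exp_pos _).le

lemma thetaW_nonneg (C : Finset V) : 0 ≤ thetaW q β h hmax Vb C := by
  unfold thetaW
  split
  · exact thetaF_nonneg C
  · exact (Real.exp_pos _).le

lemma exp_sum_add_of_disjoint (f : V → ℝ) {C D : Finset V} (hCD : Disjoint C D) :
    Real.exp (β * ∑ x ∈ C ∪ D, f x) =
      Real.exp (β * ∑ x ∈ C, f x) * Real.exp (β * ∑ x ∈ D, f x) := by
  rw [sum_union hCD, mul_add, Real.exp_add]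

lemma thetaF_union_le {C D : Finset V} (hCD : Disjoint C D) :
    thetaF q β h (C ∪ D) ≤ thetaF q β h C * thetaF q β h D := by
  unfold thetaF
  rw [sum_mul_sum]
  refine sum_le_sum fun m _ => ?_
  rw [exp_sum_add_of_disjoint (h · m) hCD]
  exact single_le_sum
    (f := fun k => Real.exp (β * ∑ x ∈ C, h x m) * Real.exp (β * ∑ x ∈ D, h x k))
    (fun _ _ => by positivity) (mem_univ m)

lemma exp_sum_le_thetaF {m : Fin q} (hm : ∀ x, h x m = hmax x) (C : Finset V) :
    Real.exp (β * ∑ x ∈ C, hmax x) ≤ thetaF q β h C := by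
  simp only [← hm]
  exact single_le_sum (f := fun k => Real.exp (β * ∑ x ∈ C, h x k))
    (fun _ _ => (Real.exp_pos _).le) (mem_univ m)

lemma thetaW_union_le {m : Fin q} (hm : ∀ x, h x m = hmax x) {C D : Finset V}
    (hCD : Disjoint C D) :
    thetaW q β h hmax Vb (C ∪ D) ≤ thetaW q β h hmax Vb C * thetaW q β h hmax Vb D := by
  have hfree : (C ∪ D) ∩ Vb = ∅ ↔ C ∩ Vb = ∅ ∧ D ∩ Vb = ∅ := by
    rw [union_inter_distrib_right, union_eq_empty]
  by_cases hC : C ∩ Vb = ∅ <;> by_cases hD : D ∩ Vb = ∅ <;>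
    simp only [thetaW, hfree, hC, hD, exp_sum_add_of_disjoint hmax hCD, and_self, and_true,
      and_false, if_true, if_false, le_refl]
  · exact thetaF_union_le hCD
  · exact mul_le_mul_of_nonneg_right (exp_sum_le_thetaF hm C) (Real.exp_pos _).le
  · exact mul_le_mul_of_nonneg_left (exp_sum_le_thetaF hm D) (Real.exp_pos _).le

end Weights

theorem stmt2_general {V E : Type*} [Fintype V] (ends : E → V × V)
    (Vb : Finset V) (q : ℕ) (β : ℝ) (h : V → Fin q → ℝ) (hmax : V → ℝ)
    (hstar : ∃ m : Fin q, ∀ x, h x m = hmax x)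
    (ω ω' : E → Bool) (hle : ∀ e, ω e ≤ ω' e) :
    gWired ends q β h hmax Vb ω' ≤ gWired ends q β h hmax Vb ω := by
  obtain ⟨m, hm⟩ := hstar
  exact prod_clusters_le_of_le ends _ thetaW_nonneg (fun _ _ => thetaW_union_le hm) hle

/-- under condition (★) on `V ∪ ∂V`, the function `g^w` is monotone
decreasing. -/
theorem stmt2 {V E : Type*} [Fintype V] [Fintype E] (ends : E → V × V)
    (Vb : Finset V) (Eb : Finset E) (hbd : BdryCompatible ends Vb Eb)
    (q : ℕ) (hq : 2 ≤ q) (β : ℝ) (hβ : 0 < β)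
    (h : V → Fin q → ℝ) (hmax : V → ℝ)
    (hmaxdef : ∀ x, IsGreatest (Set.range (h x)) (hmax x))
    (hstar : ∃ m : Fin q, ∀ x, h x m = hmax x)
    (ω ω' : E → Bool) (hle : ∀ e, ω e ≤ ω' e) :
    gWired ends q β h hmax Vb ω' ≤ gWired ends q β h hmax Vb ω :=
  stmt2_general ends Vb q β h hmax hstar ω ω' hle
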